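/- Let κ₁, κ₂ > −1/2 and κ₃ > −1. Let G and G' be polynomials in two variables that are even in the second variable and satisfy ∫_{B²} G(s,t) G'(s,t) W_B^κ(s,t) ds dt = 0, where B² is the closed unit disk. Then the functions G∘ψ and G'∘ψ on Λ_{a,b,c} coincide with polynomials that are even in the second variable and of the same degrees (explicitly, if G(s,t) = H(s,t²), then (G∘ψ)(u,v) = H(u, (−a+(a−c)u²+v²)/(b−a))), and ∫_{Λ_{a,b,c}} (G∘ψ)(u,v) (G'∘ψ)(u,v) W^κ_{a,b,c}(u,v) du dv = 0. -/

import Mathlib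

open MeasureTheory

noncomputable section

/-- The upper half `Λ_{a,b,c}` of the fully symmetric domain `Ω_{a,b,c}`. -/
def LamSet (a b c : ℝ) : Set (ℝ × ℝ) :=
  {p | a + (c - a) * p.1 ^ 2 ≤ p.2 ^ 2 ∧ p.2 ^ 2 ≤ b + (c - b) * p.1 ^ 2 ∧
       |p.1| ≤ 1 ∧ 0 ≤ p.2}

/-- The closed unit disk `B²`. -/
def Disk : Set (ℝ × ℝ) := {p | p.1 ^ 2 + p.2 ^ 2 ≤ 1}

/-- The function `𝔱(u,v) = sqrt((−a+(a−c)u²+v²)/(b−a))`. -/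
def frakt (a b c : ℝ) (p : ℝ × ℝ) : ℝ :=
  Real.sqrt ((-a + (a - c) * p.1 ^ 2 + p.2 ^ 2) / (b - a))

/-- The map `ψ(u,v) = (u, 𝔱(u,v))`. -/
def psiMap (a b c : ℝ) (p : ℝ × ℝ) : ℝ × ℝ := (p.1, frakt a b c p)

/-- The weight `W^κ_{a,b,c}` on `Λ_{a,b,c}`. -/
def Wabc (a b c κ1 κ2 κ3 : ℝ) (p : ℝ × ℝ) : ℝ :=
  |p.2| * |p.1| ^ (2 * κ1) *
    ((-a + (a - c) * p.1 ^ 2 + p.2 ^ 2) / (b - a)) ^ (κ2 - 1 / 2) *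
    ((b - (b - c) * p.1 ^ 2 - p.2 ^ 2) / (b - a)) ^ κ3

/-- The weight `W_B^κ(s,t) = |s|^{2κ₁} |t|^{2κ₂} (1−s²−t²)^{κ₃}` on the disk. -/
def WBdisk (κ1 κ2 κ3 : ℝ) (p : ℝ × ℝ) : ℝ :=
  |p.1| ^ (2 * κ1) * |p.2| ^ (2 * κ2) * (1 - p.1 ^ 2 - p.2 ^ 2) ^ κ3

/-- Evaluation of a polynomial in two variables at a point of `ℝ²`. -/
def ev2 (P : MvPolynomial (Fin 2) ℝ) (p : ℝ × ℝ) : ℝ :=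
  MvPolynomial.eval ![p.1, p.2] P

/-- A polynomial of two variables is even in the second variable. -/
def EvenSnd (P : MvPolynomial (Fin 2) ℝ) : Prop :=
  ∀ u v : ℝ, ev2 P (u, -v) = ev2 P (u, v)

/-!
Write `G(s, t) = H(s, t²)`, so that the total degree of `G` is the `(1, 2)`-weighted degree
of `H`. Since `𝔱² = z(u, v) = αu² + βv² + γ` with `β = 1/(b - a) ≠ 0`,
`G ∘ ψ = H(u, z(u, v))` is a polynomial, even in `v`: it is `H` after the shear
`(s, w) ↦ (s, αs² + βw + γ)`, which is invertible and does not raise weighted degree, followed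
by `w = v²`. Hence its total degree is again the weighted degree of `H`.

Off the null curves `v = 0` and `z = 0`, `ψ` maps `Λ_{a,b,c}` bijectively onto the upper half
of `B²` with Jacobian `v / ((b - a) 𝔱)`, and this turns `W^κ_{a,b,c} du dv` into
`(b - a) W_B^κ ds dt`. The integrand on `B²` is even in `t`, so
`2 ∫_Λ (G∘ψ)(G'∘ψ) W^κ_{a,b,c} = (b - a) ∫_{B²} G G' W_B^κ = 0`.
-/

open MvPolynomial

section ReflectionInSnd

lemma volume_setOf_snd_sq_eq_null {f : ℝ → ℝ} (hf : Measurable f) :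
    volume {p : ℝ × ℝ | p.2 ^ 2 = f p.1} = 0 := by
  have hmeas : MeasurableSet {p : ℝ × ℝ | p.2 ^ 2 = f p.1} :=
    measurableSet_eq_fun (measurable_snd.pow_const 2) (hf.comp measurable_fst)
  rw [Measure.volume_eq_prod, Measure.measure_prod_null hmeas]
  refine Filter.Eventually.of_forall fun u ↦ measure_mono_null (t := {√(f u), -√(f u)})
    (fun v (hv : v ^ 2 = f u) ↦ ?_) ((Set.toFinite _).measure_zero _)
  have hroot : √(f u) ^ 2 = v ^ 2 := by rw [Real.sq_sqrt (hv ▸ sq_nonneg v), hv]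
  exact sq_eq_sq_iff_eq_or_eq_neg.1 hroot.symm

lemma setIntegral_eq_two_mul_setIntegral_snd_pos {S : Set (ℝ × ℝ)} (hS : MeasurableSet S)
    (hSsymm : ∀ q ∈ S, (q.1, -q.2) ∈ S) {h : ℝ × ℝ → ℝ}
    (heven : ∀ q, h (q.1, -q.2) = h q) :
    ∫ q in S, h q = 2 * ∫ q in S ∩ {q | 0 < q.2}, h q := by
  set Spos := S ∩ {q : ℝ × ℝ | 0 < q.2}
  set Sneg := S ∩ {q : ℝ × ℝ | q.2 < 0}
  have hSneg : MeasurableSet Sneg := hS.inter (measurableSet_lt measurable_snd measurable_const)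
  let e : ℝ × ℝ ≃ᵐ ℝ × ℝ :=
    (MeasurableEquiv.refl ℝ).prodCongr (MeasurableEquiv.neg ℝ)
  have he_apply (q : ℝ × ℝ) : e q = (q.1, -q.2) := rfl
  have he : MeasurePreserving e volume volume := by
    rw [Measure.volume_eq_prod]
    exact (MeasurePreserving.id volume).prod (Measure.measurePreserving_neg volume)
  have hpre : e ⁻¹' Spos = Sneg := by
    ext q
    simp only [Spos, Sneg, Set.mem_preimage, Set.mem_inter_iff, Set.mem_ofPred_eq, he_apply,
      Left.neg_pos_iff]
    exact ⟨fun ⟨hq, hneg⟩ ↦ ⟨by simpa using hSsymm _ hq, hneg⟩,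
      fun ⟨hq, hneg⟩ ↦ ⟨hSsymm q hq, hneg⟩⟩
  have hh : h ∘ e = h := funext heven
  have hS_ae : S =ᵐ[volume] (Spos ∪ Sneg : Set (ℝ × ℝ)) := by
    refine ae_eq_set.2 ⟨measure_mono_null (fun q ⟨hq, hnot⟩ ↦ ?_)
      (volume_setOf_snd_sq_eq_null (f := fun _ ↦ 0) measurable_const), ?_⟩
    · rcases lt_trichotomy q.2 0 with hneg | hzero | hpos
      · exact absurd (Or.inr ⟨hq, hneg⟩) hnot
      · simp [hzero]
      · exact absurd (Or.inl ⟨hq, hpos⟩) hnot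
    · rw [Set.sdiff_eq_empty.2 (Set.union_subset Set.inter_subset_left Set.inter_subset_left),
        measure_empty]
  by_cases hint : IntegrableOn h Spos
  · have hint' : IntegrableOn h Sneg := by
      rw [← hpre, ← hh]
      exact (he.integrableOn_comp_preimage e.measurableEmbedding).2 hint
    have hneg : ∫ q in Sneg, h q = ∫ q in Spos, h q := by
      have h := he.setIntegral_preimage_emb e.measurableEmbedding h Spos
      simpa only [hpre, he_apply, heven] using h
    have hdisj : Disjoint Spos Sneg :=
      Set.disjoint_left.2 fun q hpos hneg ↦
        lt_asymm (show (0 : ℝ) < q.2 from hpos.2) (show q.2 < 0 from hneg.2)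
    rw [setIntegral_congr_set hS_ae, setIntegral_union hdisj hSneg hint hint', hneg, two_mul]
  · have hint' : ¬IntegrableOn h S := fun hS' ↦ hint (hS'.mono_set Set.inter_subset_left)
    rw [integral_undef hint, integral_undef hint', mul_zero]

end ReflectionInSnd

section BivariatePolynomial

variable {R : Type*} [CommRing R]

def biexp (i j : ℕ) : Fin 2 →₀ ℕ := Finsupp.single 0 i + Finsupp.single 1 j

@[simp] lemma biexp_apply_zero (i j : ℕ) : biexp i j 0 = i := by simp [biexp]

@[simp] lemma biexp_apply_one (i j : ℕ) : biexp i j 1 = j := by simp [biexp]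

lemma biexp_apply_self (m : Fin 2 →₀ ℕ) : biexp (m 0) (m 1) = m := by
  ext i; fin_cases i <;> simp

lemma biexp_eq_biexp_iff {i j i' j' : ℕ} : biexp i j = biexp i' j' ↔ i = i' ∧ j = j' :=
  ⟨fun h ↦ ⟨by simpa using DFunLike.congr_fun h 0, by simpa using DFunLike.congr_fun h 1⟩,
    fun ⟨hi, hj⟩ ↦ hi ▸ hj ▸ rfl⟩

lemma biexp_sum (i j : ℕ) : ((biexp i j).sum fun _ e ↦ e) = i + j := by
  simp [biexp, Finsupp.sum_add_index]

lemma weight_one_two (m : Fin 2 →₀ ℕ) : Finsupp.weight ![1, 2] m = m 0 + 2 * m 1 := by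
  simp [Finsupp.weight_eq_sum, mul_comm]

lemma monomial_biexp (i j : ℕ) (r : R) :
    monomial (biexp i j) r = (C r * X 0 ^ i * X 1 ^ j : MvPolynomial (Fin 2) R) := by
  rw [X_pow_eq_monomial, X_pow_eq_monomial, C_mul_monomial, monomial_mul, biexp]
  simp

lemma monomial_eq_C_mul_X_pow_mul_X_pow (m : Fin 2 →₀ ℕ) (r : R) :
    monomial m r = (C r * X 0 ^ m 0 * X 1 ^ m 1 : MvPolynomial (Fin 2) R) := by
  rw [← monomial_biexp, biexp_apply_self]

lemma bind₁_eq_sum_two (f : Fin 2 → MvPolynomial (Fin 2) R) (P : MvPolynomial (Fin 2) R) :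
    bind₁ f P = ∑ m ∈ P.support, C (coeff m P) * f 0 ^ m 0 * f 1 ^ m 1 := by
  conv_lhs => rw [P.as_sum]
  refine (map_sum _ _ _).trans (Finset.sum_congr rfl fun m _ ↦ ?_)
  rw [bind₁_monomial, mul_assoc]
  congr 1
  exact (Finsupp.prod_fintype m (fun i n ↦ f i ^ n) (fun _ ↦ pow_zero _)).trans
    (Fin.prod_univ_two _)

lemma eval_bind₁ {σ τ : Type*} (x : τ → R) (f : σ → MvPolynomial τ R)
    (P : MvPolynomial σ R) :
    eval x (bind₁ f P) = eval (fun i ↦ eval x (f i)) P :=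
  eval₂Hom_bind₁ _ _ _ _

lemma totalDegree_bind₁_le_weightedTotalDegree (f : Fin 2 → MvPolynomial (Fin 2) R)
    (h0 : (f 0).totalDegree ≤ 1) (h1 : (f 1).totalDegree ≤ 2) (P : MvPolynomial (Fin 2) R) :
    (bind₁ f P).totalDegree ≤ weightedTotalDegree ![1, 2] P := by
  rw [bind₁_eq_sum_two]
  refine (totalDegree_finsetSum _ _).trans (Finset.sup_le fun m hm ↦ ?_)
  calc (C (coeff m P) * f 0 ^ m 0 * f 1 ^ m 1).totalDegree
      ≤ (C (coeff m P)).totalDegree + (f 0 ^ m 0).totalDegree + (f 1 ^ m 1).totalDegree :=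
        (totalDegree_mul _ _).trans (Nat.add_le_add_right (totalDegree_mul _ _) _)
    _ ≤ 0 + m 0 * 1 + m 1 * 2 := by
        gcongr
        · simp
        · exact (totalDegree_pow _ _).trans (Nat.mul_le_mul_left _ h0)
        · exact (totalDegree_pow _ _).trans (Nat.mul_le_mul_left _ h1)
    _ = Finsupp.weight ![1, 2] m := by rw [weight_one_two]; ring
    _ ≤ weightedTotalDegree ![1, 2] P := Finset.le_sup hm

def sqSubst : Fin 2 → MvPolynomial (Fin 2) R := ![X 0, X 1 ^ 2]

lemma bind₁_sqSubst_eq_sum (P : MvPolynomial (Fin 2) R) :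
    bind₁ sqSubst P = ∑ m ∈ P.support, monomial (biexp (m 0) (2 * m 1)) (coeff m P) := by
  rw [bind₁_eq_sum_two]
  refine Finset.sum_congr rfl fun m _ ↦ ?_
  simp [sqSubst, monomial_biexp, pow_mul]

lemma coeff_biexp_bind₁_sqSubst {P : MvPolynomial (Fin 2) R} {m : Fin 2 →₀ ℕ}
    (hm : m ∈ P.support) : coeff (biexp (m 0) (2 * m 1)) (bind₁ sqSubst P) = coeff m P := by
  rw [bind₁_sqSubst_eq_sum, coeff_sum, Finset.sum_eq_single_of_mem m hm]
  · simp
  · intro m' _ hne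
    rw [coeff_monomial, if_neg]
    intro h
    obtain ⟨h0, h1⟩ := biexp_eq_biexp_iff.1 h
    have h1' : m' 1 = m 1 := by omega
    exact hne (by rw [← biexp_apply_self m', ← biexp_apply_self m, h0, h1'])

lemma totalDegree_bind₁_sqSubst [Nontrivial R] (P : MvPolynomial (Fin 2) R) :
    (bind₁ sqSubst P).totalDegree = weightedTotalDegree ![1, 2] P := by
  have h0 : (X 0 : MvPolynomial (Fin 2) R).totalDegree ≤ 1 := (totalDegree_X _).le
  have h1 : (X 1 ^ 2 : MvPolynomial (Fin 2) R).totalDegree ≤ 2 := (totalDegree_X_pow _ _).le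
  refine le_antisymm (totalDegree_bind₁_le_weightedTotalDegree sqSubst h0 h1 P) ?_
  refine Finset.sup_le fun m hm ↦ ?_
  have hcoeff : coeff (biexp (m 0) (2 * m 1)) (bind₁ sqSubst P) ≠ 0 := by
    rw [coeff_biexp_bind₁_sqSubst hm]; exact mem_support_iff.mp hm
  simpa [biexp_sum, weight_one_two] using le_totalDegree (mem_support_iff.mpr hcoeff)

-- Meaningful when every exponent of `X 1` in `P` is even; otherwise `m 1 / 2` truncates.
def halveSnd (P : MvPolynomial (Fin 2) R) : MvPolynomial (Fin 2) R :=
  ∑ m ∈ P.support, monomial (biexp (m 0) (m 1 / 2)) (coeff m P)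

lemma bind₁_sqSubst_halveSnd {P : MvPolynomial (Fin 2) R}
    (hP : ∀ m ∈ P.support, Even (m 1)) : bind₁ sqSubst (halveSnd P) = P := by
  rw [halveSnd, map_sum]
  conv_rhs => rw [P.as_sum]
  refine Finset.sum_congr rfl fun m hm ↦ ?_
  simp only [monomial_biexp, map_mul, bind₁_C_right, map_pow, bind₁_X_right, sqSubst,
    Matrix.cons_val_zero, Matrix.cons_val_one]
  rw [← pow_mul, Nat.mul_div_cancel' (hP m hm).two_dvd, monomial_eq_C_mul_X_pow_mul_X_pow]

def quadSubst (α β γ : R) : Fin 2 → MvPolynomial (Fin 2) R :=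
  ![X 0, C α * X 0 ^ 2 + C β * X 1 ^ 2 + C γ]

def shearSubst (α β γ : R) : Fin 2 → MvPolynomial (Fin 2) R :=
  ![X 0, C α * X 0 ^ 2 + C β * X 1 + C γ]

lemma totalDegree_bind₁_quadSubst_le [Nontrivial R] (α β γ : R) (P : MvPolynomial (Fin 2) R) :
    (bind₁ (quadSubst α β γ) P).totalDegree ≤ weightedTotalDegree ![1, 2] P := by
  refine totalDegree_bind₁_le_weightedTotalDegree (quadSubst α β γ) (totalDegree_X _).le ?_ P
  refine (totalDegree_add _ _).trans (max_le ((totalDegree_add _ _).trans (max_le ?_ ?_)) ?_)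
  · exact (totalDegree_mul _ _).trans (by simp)
  · exact (totalDegree_mul _ _).trans (by simp)
  · simp

lemma bind₁_sqSubst_bind₁_shearSubst (α β γ : R) (P : MvPolynomial (Fin 2) R) :
    bind₁ sqSubst (bind₁ (shearSubst α β γ) P) = bind₁ (quadSubst α β γ) P := by
  rw [bind₁_bind₁]
  congr 1
  ext1 i
  fin_cases i <;> simp [sqSubst, shearSubst, quadSubst]

variable {𝕜 : Type*} [Field 𝕜]

lemma bind₁_shearSubst_inv {α β γ : 𝕜} (hβ : β ≠ 0) (P : MvPolynomial (Fin 2) 𝕜) :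
    bind₁ (shearSubst (-α / β) β⁻¹ (-γ / β)) (bind₁ (shearSubst α β γ) P) = P := by
  suffices hX :
      (fun i ↦ bind₁ (shearSubst (-α / β) β⁻¹ (-γ / β)) (shearSubst α β γ i)) = X by
    rw [bind₁_bind₁, hX, bind₁_X_left, AlgHom.id_apply]
  ext1 i
  fin_cases i
  · simp [shearSubst]
  · calc bind₁ (shearSubst (-α / β) β⁻¹ (-γ / β)) (shearSubst α β γ 1)
        = C (α + β * (-α / β)) * X 0 ^ 2 + C (β * β⁻¹) * X 1
          + C (β * (-γ / β) + γ) := by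
          simp only [shearSubst, Matrix.cons_val_one, Matrix.cons_val_zero, map_add, map_mul,
            map_pow, bind₁_C_right, bind₁_X_right]
          ring
      _ = X 1 := by
          rw [mul_inv_cancel₀ hβ, mul_div_cancel₀ _ hβ, mul_div_cancel₀ _ hβ]
          simp

lemma totalDegree_bind₁_quadSubst {α β γ : 𝕜} (hβ : β ≠ 0)
    (P : MvPolynomial (Fin 2) 𝕜) :
    (bind₁ (quadSubst α β γ) P).totalDegree = weightedTotalDegree ![1, 2] P := by
  refine le_antisymm (totalDegree_bind₁_quadSubst_le α β γ P) ?_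
  -- `bind₁ (quadSubst α β γ)` is `bind₁ sqSubst` after the invertible
  -- `bind₁ (shearSubst α β γ)`, so it cannot lower the weighted degree
  set Q := bind₁ (shearSubst α β γ) P
  calc weightedTotalDegree ![1, 2] P
      = (bind₁ (quadSubst (-α / β) β⁻¹ (-γ / β)) Q).totalDegree := by
        rw [← bind₁_sqSubst_bind₁_shearSubst, bind₁_shearSubst_inv hβ,
          totalDegree_bind₁_sqSubst]
    _ ≤ weightedTotalDegree ![1, 2] Q := totalDegree_bind₁_quadSubst_le _ _ _ Q
    _ = (bind₁ (quadSubst α β γ) P).totalDegree := by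
        rw [← totalDegree_bind₁_sqSubst, bind₁_sqSubst_bind₁_shearSubst]

end BivariatePolynomial

section EvenInSnd

lemma even_of_mem_support_of_evenSnd {G : MvPolynomial (Fin 2) ℝ} (hG : EvenSnd G)
    {m : Fin 2 →₀ ℕ} (hm : m ∈ G.support) : Even (m 1) := by
  let reflect : Fin 2 → MvPolynomial (Fin 2) ℝ := ![X 0, -X 1]
  have hreflect : bind₁ reflect G = G := by
    refine MvPolynomial.funext fun x ↦ ?_
    have hx : x = ![x 0, x 1] := by ext i; fin_cases i <;> rfl
    have hsub : (fun i ↦ eval ![x 0, x 1] (reflect i)) = ![x 0, -x 1] := by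
      ext i; fin_cases i <;> simp [reflect]
    rw [hx, eval_bind₁, hsub]
    exact hG (x 0) (x 1)
  have hterm : ∀ m' : Fin 2 →₀ ℕ, C (coeff m' G) * reflect 0 ^ m' 0 * reflect 1 ^ m' 1
      = monomial m' ((-1) ^ m' 1 * coeff m' G) := by
    intro m'
    simp only [reflect, Matrix.cons_val_zero, Matrix.cons_val_one]
    rw [monomial_eq_C_mul_X_pow_mul_X_pow, neg_pow, C_mul, map_pow, C_neg, C_1]
    ring
  have hcoeff := congrArg (coeff m) hreflect
  simp only [bind₁_eq_sum_two, hterm, coeff_sum] at hcoeff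
  rw [Finset.sum_eq_single_of_mem m hm (fun m' _ hne ↦ by rw [coeff_monomial, if_neg hne]),
    coeff_monomial, if_pos rfl] at hcoeff
  by_contra hodd
  rw [(Nat.not_even_iff_odd.mp hodd).neg_one_pow] at hcoeff
  exact mem_support_iff.mp hm (by linarith)

lemma ev2_eq_ev2_halveSnd {G : MvPolynomial (Fin 2) ℝ} (hG : EvenSnd G) (s t : ℝ) :
    ev2 G (s, t) = ev2 (halveSnd G) (s, t ^ 2) := by
  have hsub : (fun i ↦ eval ![s, t] (sqSubst i)) = ![s, t ^ 2] := by
    ext i; fin_cases i <;> simp [sqSubst]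
  conv_lhs => rw [← bind₁_sqSubst_halveSnd fun _ ↦ even_of_mem_support_of_evenSnd hG]
  rw [ev2, eval_bind₁, hsub, ev2]

end EvenInSnd

section PsiMap

variable {a b c : ℝ}

def zMap (a b c : ℝ) (p : ℝ × ℝ) : ℝ := (-a + (a - c) * p.1 ^ 2 + p.2 ^ 2) / (b - a)

lemma frakt_eq_sqrt_zMap (p : ℝ × ℝ) : frakt a b c p = √(zMap a b c p) := rfl

lemma continuous_zMap : Continuous (zMap a b c) := by unfold zMap; fun_prop

lemma zMap_nonneg_iff (hab : a < b) {p : ℝ × ℝ} :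
    0 ≤ zMap a b c p ↔ a + (c - a) * p.1 ^ 2 ≤ p.2 ^ 2 := by
  rw [zMap, le_div_iff₀ (sub_pos.2 hab)]
  constructor <;> intro h <;> linarith

lemma zMap_le_one_sub_iff (hab : a < b) {p : ℝ × ℝ} :
    zMap a b c p ≤ 1 - p.1 ^ 2 ↔ p.2 ^ 2 ≤ b + (c - b) * p.1 ^ 2 := by
  rw [zMap, div_le_iff₀ (sub_pos.2 hab)]
  constructor <;> intro h <;> linarith

lemma frakt_sq_of_mem_LamSet (hab : a < b) {p : ℝ × ℝ} (hp : p ∈ LamSet a b c) :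
    frakt a b c p ^ 2 = zMap a b c p :=
  Real.sq_sqrt ((zMap_nonneg_iff hab).2 hp.1)

lemma exists_evenSnd_ev2_eq_halveSnd_zMap (hab : a < b) (G : MvPolynomial (Fin 2) ℝ) :
    ∃ Q : MvPolynomial (Fin 2) ℝ, EvenSnd Q ∧
      Q.totalDegree = weightedTotalDegree ![1, 2] (halveSnd G) ∧
      ∀ p, ev2 Q p = ev2 (halveSnd G) (p.1, zMap a b c p) := by
  have hba : b - a ≠ 0 := (sub_pos.2 hab).ne'
  set f := quadSubst ((a - c) / (b - a)) (b - a)⁻¹ (-a / (b - a))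
  set Q := bind₁ f (halveSnd G)
  have hQ : ∀ p, ev2 Q p = ev2 (halveSnd G) (p.1, zMap a b c p) := by
    intro p
    have hsub : (fun i ↦ eval ![p.1, p.2] (f i)) = ![p.1, zMap a b c p] := by
      ext i
      fin_cases i
      · simp [f, quadSubst]
      · simp [f, quadSubst, zMap]
        field_simp
        ring
    rw [ev2, eval_bind₁, hsub, ev2]
  refine ⟨Q, fun u v ↦ ?_, totalDegree_bind₁_quadSubst (inv_ne_zero hba) _, hQ⟩
  rw [hQ, hQ]
  simp [zMap]

lemma exists_evenSnd_eq_comp_psiMap (hab : a < b) {G : MvPolynomial (Fin 2) ℝ}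
    (hG : EvenSnd G) :
    ∃ Gψ : MvPolynomial (Fin 2) ℝ, EvenSnd Gψ ∧ Gψ.totalDegree = G.totalDegree ∧
      ∀ p ∈ LamSet a b c, ev2 G (psiMap a b c p) = ev2 Gψ p := by
  obtain ⟨Q, hQeven, hQdeg, hQ⟩ := exists_evenSnd_ev2_eq_halveSnd_zMap (c := c) hab G
  refine ⟨Q, hQeven, ?_, fun p hp ↦ ?_⟩
  · rw [hQdeg, ← totalDegree_bind₁_sqSubst,
      bind₁_sqSubst_halveSnd fun _ ↦ even_of_mem_support_of_evenSnd hG]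
  · rw [psiMap, ev2_eq_ev2_halveSnd hG, frakt_sq_of_mem_LamSet hab hp, hQ]

end PsiMap

section ChangeOfVariables

variable {a b c : ℝ}

lemma det_fst_prod (L : ℝ × ℝ →L[ℝ] ℝ) :
    ((ContinuousLinearMap.fst ℝ ℝ ℝ).prod L).det = L (0, 1) := by
  rw [ContinuousLinearMap.det, ← LinearMap.det_toMatrix (Module.Basis.finTwoProd ℝ),
    Matrix.det_fin_two]
  simp [LinearMap.toMatrix_apply]

lemma exists_hasFDerivAt_zMap (p : ℝ × ℝ) :
    ∃ L : ℝ × ℝ →L[ℝ] ℝ,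
      HasFDerivAt (zMap a b c) L p ∧ L (0, 1) = 2 * p.2 / (b - a) := by
  have hfun : zMap a b c = fun q ↦ (-a + (a - c) * q.1 ^ 2 + q.2 ^ 2) * (b - a)⁻¹ := by
    ext q; exact div_eq_mul_inv _ _
  rw [hfun]
  refine ⟨_, ((((hasFDerivAt_fst (p := p)).pow 2).const_mul (a - c)).const_add (-a)).add
    ((hasFDerivAt_snd (p := p)).pow 2) |>.mul_const (b - a)⁻¹, ?_⟩
  simp
  ring

lemma differentiableAt_psiMap {p : ℝ × ℝ} (hp : zMap a b c p ≠ 0) :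
    DifferentiableAt ℝ (psiMap a b c) p := by
  obtain ⟨L, hL, -⟩ := exists_hasFDerivAt_zMap (a := a) (b := b) (c := c) p
  exact (hasFDerivAt_fst.prodMk (hL.sqrt hp)).differentiableAt

lemma det_fderiv_psiMap {p : ℝ × ℝ} (hp : 0 < zMap a b c p) :
    (fderiv ℝ (psiMap a b c) p).det = p.2 / ((b - a) * frakt a b c p) := by
  obtain ⟨L, hL, hL01⟩ := exists_hasFDerivAt_zMap (a := a) (b := b) (c := c) p
  have hψ : HasFDerivAt (psiMap a b c) _ p := hasFDerivAt_fst.prodMk (hL.sqrt hp.ne')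
  rw [hψ.fderiv, det_fst_prod, FunLike.coe_smul, Pi.smul_apply, hL01, smul_eq_mul,
    ← frakt_eq_sqrt_zMap]
  field_simp

lemma isClosed_LamSet : IsClosed (LamSet a b c) := by
  simp only [LamSet, Set.ofPred_and]
  refine .inter (isClosed_le ?_ ?_) (.inter (isClosed_le ?_ ?_)
    (.inter (isClosed_le ?_ ?_) (isClosed_le ?_ ?_))) <;> fun_prop

-- Off the curves `v = 0` and `z = 0`, `ψ` is differentiable with positive Jacobian.
def lamPos (a b c : ℝ) : Set (ℝ × ℝ) := {p ∈ LamSet a b c | 0 < p.2 ∧ 0 < zMap a b c p}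

lemma measurableSet_lamPos : MeasurableSet (lamPos a b c) :=
  isClosed_LamSet.measurableSet.inter ((measurableSet_lt measurable_const measurable_snd).inter
    (measurableSet_lt measurable_const continuous_zMap.measurable))

lemma injOn_psiMap_lamPos (hab : a < b) : Set.InjOn (psiMap a b c) (lamPos a b c) := by
  intro p hp q hq hpq
  have h1 : p.1 = q.1 := by simpa [psiMap] using congrArg Prod.fst hpq
  have hz : zMap a b c p = zMap a b c q := by
    have h := congrArg (fun x ↦ x.2 ^ 2) hpq
    simpa [psiMap, frakt_eq_sqrt_zMap, Real.sq_sqrt hp.2.2.le, Real.sq_sqrt hq.2.2.le] using h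
  have h2 : p.2 ^ 2 = q.2 ^ 2 := by
    rw [zMap, zMap, div_left_inj' (sub_pos.2 hab).ne', h1] at hz
    linarith
  exact Prod.ext h1 ((pow_left_inj₀ hp.2.1.le hq.2.1.le two_ne_zero).1 h2)

lemma psiMap_image_lamPos (ha : 0 ≤ a) (hab : a < b) (hc : 0 ≤ c) :
    psiMap a b c '' lamPos a b c = Disk ∩ {q | 0 < q.2} := by
  ext q
  constructor
  · rintro ⟨p, ⟨hp, -, hz⟩, rfl⟩
    refine ⟨?_, Real.sqrt_pos.2 hz⟩
    show p.1 ^ 2 + frakt a b c p ^ 2 ≤ 1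
    rw [frakt_sq_of_mem_LamSet hab hp]
    linarith [(zMap_le_one_sub_iff hab).2 hp.2.1]
  · rintro ⟨hq, ht⟩
    have hq' : q.1 ^ 2 + q.2 ^ 2 ≤ 1 := hq
    set w := a + (c - a) * q.1 ^ 2 + (b - a) * q.2 ^ 2
    have hw : 0 < w := by
      have : 0 < (b - a) * q.2 ^ 2 := mul_pos (sub_pos.2 hab) (pow_pos ht 2)
      nlinarith [mul_nonneg hc (sq_nonneg q.1), mul_nonneg ha (by nlinarith : 0 ≤ 1 - q.1 ^ 2)]
    have hz : zMap a b c (q.1, √w) = q.2 ^ 2 := by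
      rw [zMap, Real.sq_sqrt hw.le, div_eq_iff (sub_pos.2 hab).ne']
      ring
    refine ⟨(q.1, √w), ⟨⟨?_, ?_, ?_, Real.sqrt_nonneg w⟩, Real.sqrt_pos.2 hw, ?_⟩, ?_⟩
    · show a + (c - a) * q.1 ^ 2 ≤ √w ^ 2
      rw [Real.sq_sqrt hw.le]
      nlinarith [sub_pos.2 hab]
    · show √w ^ 2 ≤ b + (c - b) * q.1 ^ 2
      rw [Real.sq_sqrt hw.le]
      nlinarith [sub_pos.2 hab]
    · exact (sq_le_one_iff_abs_le_one q.1).1 (by nlinarith)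
    · rw [hz]; exact pow_pos ht 2
    · rw [psiMap, frakt_eq_sqrt_zMap, hz, Real.sqrt_sq ht.le]

lemma abs_det_mul_WBdisk_psiMap (hab : a < b) (κ1 κ2 κ3 : ℝ) {p : ℝ × ℝ}
    (hp : p ∈ lamPos a b c) :
    |(fderiv ℝ (psiMap a b c) p).det| * ((b - a) * WBdisk κ1 κ2 κ3 (psiMap a b c p))
      = Wabc a b c κ1 κ2 κ3 p := by
  obtain ⟨hpΛ, hv, hz⟩ := hp
  rw [Wabc, WBdisk, psiMap, ← zMap]
  set t := frakt a b c p
  have ht : 0 < t := Real.sqrt_pos.2 hz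
  have ht2 : zMap a b c p = t ^ 2 := (frakt_sq_of_mem_LamSet hab hpΛ).symm
  have hba : 0 < b - a := sub_pos.2 hab
  have hdet : (fderiv ℝ (psiMap a b c) p).det = p.2 / ((b - a) * t) := det_fderiv_psiMap hz
  have hlast : (b - (b - c) * p.1 ^ 2 - p.2 ^ 2) / (b - a) = 1 - p.1 ^ 2 - t ^ 2 := by
    rw [← ht2, zMap]
    field_simp
    ring
  have hpow : (t ^ 2) ^ (κ2 - 1 / 2) = t ^ (2 * κ2) / t := by
    rw [← Real.rpow_natCast, ← Real.rpow_mul ht.le,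
      show ((2 : ℕ) : ℝ) * (κ2 - 1 / 2) = 2 * κ2 - 1 by push_cast; ring,
      Real.rpow_sub ht, Real.rpow_one]
  rw [ht2, hlast, hpow, hdet, abs_of_pos (by positivity), abs_of_pos ht, abs_of_pos hv]
  field_simp

lemma setIntegral_lamPos_eq (ha : 0 ≤ a) (hab : a < b) (hc : 0 ≤ c) (κ1 κ2 κ3 : ℝ)
    (F : ℝ × ℝ → ℝ) :
    ∫ p in lamPos a b c, F (psiMap a b c p) * Wabc a b c κ1 κ2 κ3 p
      = (b - a) * ∫ q in Disk ∩ {q | 0 < q.2}, F q * WBdisk κ1 κ2 κ3 q := by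
  rw [← psiMap_image_lamPos ha hab hc, ← integral_const_mul,
    integral_image_eq_integral_abs_det_fderiv_smul volume measurableSet_lamPos
      (fun p hp ↦ (differentiableAt_psiMap hp.2.2.ne').hasFDerivAt.hasFDerivWithinAt)
      (injOn_psiMap_lamPos hab)]
  refine setIntegral_congr_fun measurableSet_lamPos fun p hp ↦ ?_
  rw [smul_eq_mul, ← abs_det_mul_WBdisk_psiMap hab κ1 κ2 κ3 hp]
  ring

lemma LamSet_ae_eq_lamPos (hab : a < b) : LamSet a b c =ᵐ[volume] lamPos a b c := by
  refine ae_eq_set.2 ⟨measure_mono_null (fun p ⟨hp, hnot⟩ ↦ ?_) (measure_union_null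
    (volume_setOf_snd_sq_eq_null (f := fun _ ↦ 0) measurable_const)
    (volume_setOf_snd_sq_eq_null (f := fun u ↦ a + (c - a) * u ^ 2) (by fun_prop))), ?_⟩
  · rcases hp.2.2.2.eq_or_lt with hv | hv
    · exact Or.inl (by simp [← hv])
    · have hz : zMap a b c p = 0 :=
        le_antisymm (not_lt.1 fun hz ↦ hnot ⟨hp, hv, hz⟩) ((zMap_nonneg_iff hab).2 hp.1)
      have hnum := (div_eq_zero_iff.1 hz).resolve_right (sub_pos.2 hab).ne'
      exact Or.inr (by show p.2 ^ 2 = a + (c - a) * p.1 ^ 2; linarith)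
  · rw [show lamPos a b c \ LamSet a b c = ∅ from Set.sdiff_eq_empty.2 (Set.sep_subset _ _),
      measure_empty]

lemma two_mul_setIntegral_LamSet (ha : 0 ≤ a) (hab : a < b) (hc : 0 ≤ c) (κ1 κ2 κ3 : ℝ)
    {F : ℝ × ℝ → ℝ} (hF : ∀ q, F (q.1, -q.2) = F q) :
    2 * ∫ p in LamSet a b c, F (psiMap a b c p) * Wabc a b c κ1 κ2 κ3 p
      = (b - a) * ∫ q in Disk, F q * WBdisk κ1 κ2 κ3 q := by
  have hDisk : MeasurableSet Disk := measurableSet_le (by fun_prop) measurable_const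
  rw [setIntegral_congr_set (LamSet_ae_eq_lamPos hab), setIntegral_lamPos_eq ha hab hc,
    setIntegral_eq_two_mul_setIntegral_snd_pos hDisk (fun q hq ↦ by simpa [Disk] using hq)
      (fun q ↦ by simp [hF, WBdisk])]
  ring

end ChangeOfVariables

theorem orthogonality_transfers_through_psi
    (a b c κ1 κ2 κ3 : ℝ) (ha : 0 ≤ a) (hab : a < b) (hc : 0 ≤ c)
    (G G' : MvPolynomial (Fin 2) ℝ) (hG : EvenSnd G) (hG' : EvenSnd G')
    (horth : ∫ p in Disk, ev2 G p * ev2 G' p * WBdisk κ1 κ2 κ3 p = 0) :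
    -- explicit description: if `G(s,t) = H(s,t²)` then `(G∘ψ)(u,v) = H(u, z(u,v))`
    (∀ H : MvPolynomial (Fin 2) ℝ,
      (∀ s t : ℝ, ev2 G (s, t) = ev2 H (s, t ^ 2)) →
      ∀ p ∈ LamSet a b c,
        ev2 G (psiMap a b c p)
          = ev2 H (p.1, (-a + (a - c) * p.1 ^ 2 + p.2 ^ 2) / (b - a))) ∧
    -- `G∘ψ` coincides on `Λ_{a,b,c}` with a polynomial even in `v` of the same degree
    (∃ Gψ : MvPolynomial (Fin 2) ℝ, EvenSnd Gψ ∧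
      Gψ.totalDegree = G.totalDegree ∧
      ∀ p ∈ LamSet a b c, ev2 G (psiMap a b c p) = ev2 Gψ p) ∧
    (∃ Gψ' : MvPolynomial (Fin 2) ℝ, EvenSnd Gψ' ∧
      Gψ'.totalDegree = G'.totalDegree ∧
      ∀ p ∈ LamSet a b c, ev2 G' (psiMap a b c p) = ev2 Gψ' p) ∧
    -- the transferred orthogonality
    ∫ p in LamSet a b c,
        ev2 G (psiMap a b c p) * ev2 G' (psiMap a b c p) * Wabc a b c κ1 κ2 κ3 p
      = 0 := by
  refine ⟨fun H hH p hp ↦ ?_, exists_evenSnd_eq_comp_psiMap hab hG,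
    exists_evenSnd_eq_comp_psiMap hab hG', ?_⟩
  · rw [psiMap, hH, frakt_sq_of_mem_LamSet hab hp, zMap]
  · have h := two_mul_setIntegral_LamSet ha hab hc κ1 κ2 κ3
      (F := fun q ↦ ev2 G q * ev2 G' q) fun q ↦ by simp only [hG q.1 q.2, hG' q.1 q.2]
    rw [horth, mul_zero] at h
    simpa using h
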